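/- arXiv:2605.18812 — 2 statements merged into one kernel-verified Lean document; each statement's English description precedes it below -/
import Mathlib

section
/- Let Z_1, ..., Z_{n+1} be exchangeable real-valued random variables and let α ∈ (0,1). Define q̂ as the ⌈(n+1)(1-α)⌉-th smallest value among Z_1,...,Z_n (with q̂ = +∞ if ⌈(n+1)(1-α)⌉ > n). Then P(Z_{n+1} ≤ q̂) ≥ 1 - α. -/
/-!
Writing `v ∘ Tuple.sort v` for the sorted scores, `z ≤ kthSmallest v r` holds exactly when fewer
than `r` entries of `v` lie below `z`. So appending the test score to the calibration scores does
not change whether it lies below the `r`-th smallest one, and the coverage event becomes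
`Z (last n) ≤ kthSmallest Z r` over all `n + 1` scores. Pointwise at least `r` of the `n + 1`
scores lie below their `r`-th smallest, while by exchangeability each of them does so with the same
probability `p`. Hence `(n + 1) p ≥ r ≥ (n + 1)(1 - α)`.
-/

open MeasureTheory

/-- The `r`-th smallest value (1-indexed) among `Z 0, ..., Z (n-1)`. -/
noncomputable def kthSmallest {n : ℕ} (Z : Fin n → ℝ) (r : ℕ) : ℝ :=
  (List.insertionSort (· ≤ ·) (List.ofFn Z)).getD (r - 1) 0

/-- The joint law of `(Z 1, ..., Z m)` is invariant under every permutation of indices. -/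
def Exchangeable {Ω : Type*} [MeasurableSpace Ω] (μ : Measure Ω) {m : ℕ}
    (Z : Fin m → Ω → ℝ) : Prop :=
  ∀ σ : Equiv.Perm (Fin m),
    Measure.map (fun ω => fun i => Z (σ i) ω) μ = Measure.map (fun ω => fun i => Z i ω) μ

open Finset
open scoped ENNReal

lemma card_filter_comp_perm {α : Type*} [Fintype α] (σ : Equiv.Perm α) (p : α → Prop)
    [DecidablePred p] : #{i | p (σ i)} = #{i | p i} :=
  card_equiv σ (by simp)

lemma insertionSort_ofFn_eq_ofFn_comp_sort {m : ℕ} (v : Fin m → ℝ) :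
    List.insertionSort (· ≤ ·) (List.ofFn v) = List.ofFn (v ∘ Tuple.sort v) :=
  List.Perm.eq_of_pairwise' (List.pairwise_insertionSort _ _)
    (List.pairwise_ofFn.2 fun _ _ h => Tuple.monotone_sort v h.le)
    ((List.perm_insertionSort _ _).trans ((Tuple.sort v).ofFn_comp_perm v).symm)

lemma kthSmallest_eq_sort {m : ℕ} (v : Fin m → ℝ) {r : ℕ} (hr : r - 1 < m) :
    kthSmallest v r = v (Tuple.sort v ⟨r - 1, hr⟩) := by
  rw [kthSmallest, insertionSort_ofFn_eq_ofFn_comp_sort, List.getD_eq_getElem _ _ (by simpa),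
    List.getElem_ofFn]
  rfl

lemma le_kthSmallest_iff {m : ℕ} (v : Fin m → ℝ) {r : ℕ} (h1 : 1 ≤ r) (h2 : r ≤ m) (z : ℝ) :
    z ≤ kthSmallest v r ↔ #{i | v i < z} < r := by
  rw [kthSmallest_eq_sort v (by omega), ← not_lt, ← Function.comp_apply (f := v),
    ← Tuple.lt_card_lt_iff_apply_lt_of_monotone (Tuple.monotone_sort v),
    Function.comp_def, card_filter_comp_perm (Tuple.sort v) (v · < z), Fin.val_mk]
  omega

lemma le_card_le_kthSmallest {m : ℕ} (v : Fin m → ℝ) {r : ℕ} (h1 : 1 ≤ r) (h2 : r ≤ m) :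
    r ≤ #{i | v i ≤ kthSmallest v r} := by
  have := (Tuple.lt_card_le_iff_apply_le_of_monotone (j := ⟨r - 1, by omega⟩)
    (a := kthSmallest v r) (Tuple.monotone_sort v)).2 (kthSmallest_eq_sort v _).ge
  rw [Function.comp_def, card_filter_comp_perm (Tuple.sort v) (v · ≤ kthSmallest v r),
    Fin.val_mk] at this
  omega

lemma kthSmallest_comp_perm {m : ℕ} (v : Fin m → ℝ) (σ : Equiv.Perm (Fin m)) (r : ℕ) :
    kthSmallest (v ∘ σ) r = kthSmallest v r := by
  rw [kthSmallest, kthSmallest, List.Perm.eq_of_pairwise' (List.pairwise_insertionSort _ _)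
    (List.pairwise_insertionSort _ _) ((List.perm_insertionSort _ _).trans
      ((σ.ofFn_comp_perm v).trans (List.perm_insertionSort _ _).symm))]

lemma le_kthSmallest_castSucc_iff {m : ℕ} (w : Fin (m + 1) → ℝ) {r : ℕ} (h1 : 1 ≤ r)
    (h2 : r ≤ m) :
    w (Fin.last m) ≤ kthSmallest (fun i : Fin m => w i.castSucc) r ↔
      w (Fin.last m) ≤ kthSmallest w r := by
  rw [le_kthSmallest_iff _ h1 h2, le_kthSmallest_iff _ h1 (by omega), card_filter, card_filter,
    Fin.sum_univ_castSucc, if_neg (lt_irrefl _), add_zero]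

lemma measurableSet_le_kthSmallest {m : ℕ} (i : Fin m) {r : ℕ} (h1 : 1 ≤ r) (h2 : r ≤ m) :
    MeasurableSet {v : Fin m → ℝ | v i ≤ kthSmallest v r} := by
  simp_rw [le_kthSmallest_iff _ h1 h2, card_filter]
  refine measurableSet_lt (measurable_sum _ fun j _ => ?_) measurable_const
  exact Measurable.ite (measurableSet_lt (measurable_pi_apply j) (measurable_pi_apply i))
    measurable_const measurable_const

section Measure

variable {Ω : Type*} [MeasurableSpace Ω] {μ : Measure Ω}

lemma natCast_mul_measure_univ_le_sum {ι : Type*} [Fintype ι] {P : ι → Ω → Prop}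
    [∀ i ω, Decidable (P i ω)] (hP : ∀ i, MeasurableSet {ω | P i ω}) {r : ℕ}
    (hr : ∀ ω, r ≤ #{i | P i ω}) :
    (r : ℝ≥0∞) * μ Set.univ ≤ ∑ i, μ {ω | P i ω} := by
  have hcount : ∀ ω, (r : ℝ≥0∞) ≤ ∑ i, {ω | P i ω}.indicator 1 ω := fun ω => by
    simpa [Set.indicator_apply, sum_boole] using hr ω
  calc (r : ℝ≥0∞) * μ Set.univ = ∫⁻ _, (r : ℝ≥0∞) ∂μ := (lintegral_const _).symm
    _ ≤ ∫⁻ ω, ∑ i, {ω | P i ω}.indicator 1 ω ∂μ := lintegral_mono hcount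
    _ = ∑ i, μ {ω | P i ω} := by
      rw [lintegral_finsetSum _ fun i _ => measurable_one.indicator (hP i)]
      simp_rw [lintegral_indicator_one (hP _)]

variable {m : ℕ} {Z : Fin m → Ω → ℝ}

lemma Exchangeable.measure_comp_perm_mem (hZ : ∀ i, Measurable (Z i)) (hexch : Exchangeable μ Z)
    (σ : Equiv.Perm (Fin m)) {S : Set (Fin m → ℝ)} (hS : MeasurableSet S) :
    μ ((fun ω i => Z (σ i) ω) ⁻¹' S) = μ ((fun ω i => Z i ω) ⁻¹' S) := by
  rw [← Measure.map_apply (measurable_pi_iff.2 fun i => hZ (σ i)) hS,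
    ← Measure.map_apply (measurable_pi_iff.2 hZ) hS, hexch σ]

lemma Exchangeable.measure_le_statistic_eq (hZ : ∀ i, Measurable (Z i))
    (hexch : Exchangeable μ Z) {T : (Fin m → ℝ) → ℝ}
    (hT : ∀ v (σ : Equiv.Perm (Fin m)), T (v ∘ σ) = T v)
    (hTmeas : ∀ i, MeasurableSet {v | v i ≤ T v}) (i j : Fin m) :
    μ {ω | Z i ω ≤ T (fun k => Z k ω)} = μ {ω | Z j ω ≤ T (fun k => Z k ω)} := by
  have := hexch.measure_comp_perm_mem hZ (Equiv.swap i j) (hTmeas j)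
  simp only [Set.preimage_ofPred_eq, Equiv.swap_apply_right] at this
  convert this using 4 with ω
  rw [← hT _ (Equiv.swap i j)]
  rfl

theorem Exchangeable.natCast_le_mul_measureReal_le_kthSmallest [IsProbabilityMeasure μ]
    (hZ : ∀ i, Measurable (Z i)) (hexch : Exchangeable μ Z) {r : ℕ} (h1 : 1 ≤ r) (h2 : r ≤ m)
    (i : Fin m) :
    (r : ℝ) ≤ m * μ.real {ω | Z i ω ≤ kthSmallest (fun k => Z k ω) r} := by
  have hmeas : ∀ j, MeasurableSet {ω | Z j ω ≤ kthSmallest (fun k => Z k ω) r} := fun j =>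
    measurable_pi_iff.2 hZ (measurableSet_le_kthSmallest j h1 h2)
  have hcover := natCast_mul_measure_univ_le_sum (μ := μ) hmeas fun ω =>
    le_card_le_kthSmallest (fun k => Z k ω) h1 h2
  rw [measure_univ, mul_one, sum_congr rfl fun j _ => hexch.measure_le_statistic_eq hZ
    (kthSmallest_comp_perm · · r) (measurableSet_le_kthSmallest · h1 h2) j i, sum_const,
    card_univ, Fintype.card_fin, nsmul_eq_mul] at hcover
  simpa [measureReal_def] using ENNReal.toReal_mono (by finiteness) hcover

end Measure

theorem split_conformal_marginal_coverage
    {Ω : Type*} [MeasurableSpace Ω] (μ : Measure Ω) [IsProbabilityMeasure μ]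
    (n : ℕ) (Z : Fin (n + 1) → Ω → ℝ) (hZ : ∀ i, Measurable (Z i))
    (hexch : Exchangeable μ Z)
    (α : ℝ) (hα0 : 0 < α) (hα1 : α < 1)
    (r : ℕ) (hr : r = ⌈((n : ℝ) + 1) * (1 - α)⌉₊)
    (qhat : Ω → EReal)
    (hq : ∀ ω, qhat ω = if r ≤ n then
        ((kthSmallest (fun i : Fin n => Z i.castSucc ω) r : ℝ) : EReal) else (⊤ : EReal)) :
    1 - α ≤ (μ {ω | ((Z (Fin.last n) ω : ℝ) : EReal) ≤ qhat ω}).toReal := by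
  by_cases hrn : r ≤ n
  · have hr1 : 1 ≤ r := hr ▸ Nat.one_le_ceil_iff.2 (mul_pos (by positivity) (by linarith))
    have hevent : {ω | ((Z (Fin.last n) ω : ℝ) : EReal) ≤ qhat ω} =
        {ω | Z (Fin.last n) ω ≤ kthSmallest (fun k => Z k ω) r} := by
      ext ω
      simp only [Set.mem_ofPred_eq, hq ω, if_pos hrn, EReal.coe_le_coe_iff]
      exact le_kthSmallest_castSucc_iff (fun k => Z k ω) hr1 hrn
    have hcover := hexch.natCast_le_mul_measureReal_le_kthSmallest hZ hr1 (by omega) (Fin.last n)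
    have hceil : ((n : ℝ) + 1) * (1 - α) ≤ r := hr ▸ Nat.le_ceil _
    rw [hevent, ← measureReal_def]
    push_cast at hcover
    exact le_of_mul_le_mul_left (hceil.trans hcover) (by positivity)
  · have hevent : {ω | ((Z (Fin.last n) ω : ℝ) : EReal) ≤ qhat ω} = Set.univ := by
      ext ω
      simp [hq ω, hrn]
    rw [hevent, measure_univ, ENNReal.toReal_one]
    linarith
end

section
/- Let Z_1, ..., Z_{n+1} be exchangeable real-valued random variables that are almost surely distinct, and let α ∈ (0,1) with ⌈(n+1)(1-α)⌉ ≤ n. Define q̂ as the ⌈(n+1)(1-α)⌉-th smallest among Z_1,...,Z_n. Then P(Z_{n+1} ≤ q̂) ≤ 1 - α + 1/(n+1). -/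
open MeasureTheory

/-! When the scores are almost surely distinct, `Z (last n) ≤ q̂` says exactly that fewer than `r`
of the `n + 1` scores lie strictly below `Z (last n)`, i.e. that its strict rank is `< r`. For
distinct values exactly `r` indices have rank `< r`, and by exchangeability all indices are equally
likely to be among them, so the event has probability `r / (n + 1)`; finally
`r = ⌈(n + 1)(1 - α)⌉ < (n + 1)(1 - α) + 1`. -/

open Finset Function
open scoped ENNReal

theorem List.countP_ofFn {α : Type*} {n : ℕ} (f : Fin n → α) (p : α → Prop)
    [DecidablePred p] : (List.ofFn f).countP p = #{i | p (f i)} := by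
  rw [List.ofFn_eq_map, ← Multiset.coe_countP, ← Multiset.map_coe, Multiset.countP_map]
  rfl

theorem List.countP_eq_card_filter_get {α : Type*} (s : List α) (p : α → Prop)
    [DecidablePred p] : s.countP p = #{k | p (s.get k)} := by
  conv_lhs => rw [← List.ofFn_get s]
  exact List.countP_ofFn s.get p

theorem List.SortedLT.le_get_iff_card_lt_le {α : Type*} [LinearOrder α] {s : List α}
    (hs : s.SortedLT) (k : Fin s.length) {x : α} (hx : x ∉ s) :
    x ≤ s.get k ↔ #{k' | s.get k' < x} ≤ k := by
  constructor
  · intro hle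
    have hlt : x < s.get k := hle.lt_of_ne fun h => hx (h ▸ s.get_mem k)
    calc #{k' | s.get k' < x} ≤ #(Iio k) := card_le_card fun k' hk' =>
          mem_Iio.2 (hs.lt_iff_lt.1 ((Finset.mem_filter.1 hk').2.trans hlt))
      _ = k := Fin.card_Iio k
  · intro hcard
    by_contra! hlt
    have : #(Iic k) ≤ #{k' | s.get k' < x} := card_le_card fun k' hk' =>
      Finset.mem_filter.2 ⟨mem_univ k', (hs.le_iff_le.2 (mem_Iic.1 hk')).trans_lt hlt⟩
    rw [Fin.card_Iic] at this
    omega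

theorem le_kthSmallest_iff_s8 {n r : ℕ} {w : Fin n → ℝ} (hw : Injective w) (hr0 : 0 < r)
    (hrn : r ≤ n) {x : ℝ} (hx : ∀ j, w j ≠ x) :
    x ≤ kthSmallest w r ↔ #{j | w j < x} < r := by
  set s := List.insertionSort (· ≤ ·) (List.ofFn w)
  have hperm : s.Perm (List.ofFn w) := List.perm_insertionSort _ _
  have hs : s.SortedLT := List.sortedLE_insertionSort.sortedLT_of_nodup
    (hperm.nodup_iff.2 (List.nodup_ofFn.2 hw))
  have hk : r - 1 < s.length := by rw [hperm.length_eq, List.length_ofFn]; omega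
  have hxs : x ∉ s := by simpa [hperm.mem_iff, List.mem_ofFn] using hx
  have hkth : kthSmallest w r = s.get ⟨r - 1, hk⟩ := by
    rw [kthSmallest, List.getD_eq_getElem (hn := hk), List.get_eq_getElem]
  have hcount : #{j | w j < x} = #{k | s.get k < x} := by
    rw [← List.countP_ofFn w (· < x), ← hperm.countP_eq, List.countP_eq_card_filter_get]
  rw [hkth, hs.le_get_iff_card_lt_le _ hxs, hcount, Fin.val_mk]
  omega

def strictRank {ι α : Type*} [Fintype ι] [LinearOrder α] (v : ι → α) (i : ι) : ℕ :=
  #{j | v j < v i}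

section strictRank

variable {ι α : Type*} [Fintype ι] [LinearOrder α] {v : ι → α}

theorem strictRank_lt_strictRank {i j : ι} (h : v i < v j) : strictRank v i < strictRank v j :=
  card_lt_card <| (ssubset_iff_of_subset fun k hk => by
    simp only [mem_filter, mem_univ, true_and] at hk ⊢
    exact hk.trans h).2 ⟨i, by simp [h]⟩

theorem strictRank_injective (hv : Injective v) : Injective (strictRank v) := by
  intro i j hij
  by_contra hne
  rcases (hv.ne hne).lt_or_gt with h | h
  exacts [(strictRank_lt_strictRank h).ne hij, (strictRank_lt_strictRank h).ne' hij]

theorem strictRank_lt_card (v : ι → α) (i : ι) : strictRank v i < Fintype.card ι :=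
  card_lt_card (filter_ssubset.2 ⟨i, mem_univ i, lt_irrefl _⟩)

theorem image_strictRank (hv : Injective v) :
    univ.image (strictRank v) = range (Fintype.card ι) :=
  eq_of_subset_of_card_le (fun k hk => by
      obtain ⟨i, -, rfl⟩ := mem_image.1 hk
      exact mem_range.2 (strictRank_lt_card v i))
    (by rw [card_range, card_image_of_injective _ (strictRank_injective hv), card_univ])

theorem card_filter_strictRank_lt (hv : Injective v) {r : ℕ} (hr : r ≤ Fintype.card ι) :
    #{i | strictRank v i < r} = r := by
  calc #{i | strictRank v i < r}
      = #((univ.filter fun i => strictRank v i < r).image (strictRank v)) :=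
        (card_image_of_injective _ (strictRank_injective hv)).symm
    _ = #((range (Fintype.card ι)).filter (· < r)) := by
        rw [← image_strictRank hv, filter_image]
    _ = #(range r) := by congr 1; ext; simp; omega
    _ = r := card_range r

theorem strictRank_comp_perm (v : ι → α) (σ : Equiv.Perm ι) (i : ι) :
    strictRank (v ∘ σ) i = strictRank v (σ i) :=
  card_equiv σ fun j => by simp

theorem strictRank_last {n : ℕ} (v : Fin (n + 1) → α) :
    strictRank v (Fin.last n) = #{j : Fin n | v j.castSucc < v (Fin.last n)} := by
  rw [strictRank, card_filter, card_filter, Fin.sum_univ_castSucc]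
  simp

end strictRank

theorem last_le_kthSmallest_iff_strictRank_lt {n r : ℕ} {v : Fin (n + 1) → ℝ}
    (hv : Injective v) (hr0 : 0 < r) (hrn : r ≤ n) :
    v (Fin.last n) ≤ kthSmallest (fun j : Fin n => v j.castSucc) r ↔
      strictRank v (Fin.last n) < r := by
  rw [strictRank_last]
  exact le_kthSmallest_iff_s8 (w := fun j => v j.castSucc) (hv.comp (Fin.castSucc_injective n))
    hr0 hrn fun j => hv.ne (Fin.castSucc_lt_last j).ne

theorem measurable_strictRank {ι : Type*} [Fintype ι] (i : ι) :
    Measurable fun v : ι → ℝ => strictRank v i := by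
  simp only [strictRank, card_filter]
  exact Finset.measurable_sum _ fun j _ => Measurable.ite
    (measurableSet_lt (measurable_pi_apply j) (measurable_pi_apply i)) measurable_const
    measurable_const

section Exchangeable

variable {Ω : Type*} [MeasurableSpace Ω] {μ : Measure Ω} {m : ℕ} {Z : Fin m → Ω → ℝ}

theorem measurableSet_strictRank (hZ : ∀ i, Measurable (Z i)) (p : ℕ → Prop) (i : Fin m) :
    MeasurableSet {ω | p (strictRank (Z · ω) i)} :=
  (measurable_strictRank i).comp (measurable_pi_lambda _ hZ)
    (MeasurableSet.of_discrete (s := {k | p k}))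

theorem Exchangeable.measure_strictRank_eq (hexch : Exchangeable μ Z)
    (hZ : ∀ i, Measurable (Z i)) (p : ℕ → Prop) (i j : Fin m) :
    μ {ω | p (strictRank (Z · ω) i)} = μ {ω | p (strictRank (Z · ω) j)} := by
  set σ := Equiv.swap i j
  have hE : MeasurableSet {v : Fin m → ℝ | p (strictRank v j)} :=
    measurable_strictRank j (MeasurableSet.of_discrete (s := {k | p k}))
  have hpre : (fun ω k => Z (σ k) ω) ⁻¹' {v | p (strictRank v j)} =
      {ω | p (strictRank (Z · ω) i)} := by
    ext ω
    change p (strictRank ((Z · ω) ∘ σ) j) ↔ _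
    rw [strictRank_comp_perm, Equiv.swap_apply_right]
    rfl
  have h := congrArg (· {v | p (strictRank v j)}) (hexch σ)
  rwa [Measure.map_apply (measurable_pi_lambda _ fun k => hZ (σ k)) hE,
    Measure.map_apply (measurable_pi_lambda _ hZ) hE, hpre] at h

theorem sum_measure_strictRank_lt (hZ : ∀ i, Measurable (Z i))
    (hinj : ∀ᵐ ω ∂μ, Injective (Z · ω)) {r : ℕ} (hr : r ≤ m) :
    ∑ i, μ {ω | strictRank (Z · ω) i < r} = r * μ Set.univ := by
  set A : Fin m → Set Ω := fun i => {ω | strictRank (Z · ω) i < r}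
  have hA (i : Fin m) : MeasurableSet (A i) := measurableSet_strictRank hZ (· < r) i
  calc ∑ i, μ (A i) = ∑ i, ∫⁻ ω, (A i).indicator 1 ω ∂μ := by
        simp_rw [lintegral_indicator_one (hA _)]
    _ = ∫⁻ ω, ∑ i, (A i).indicator 1 ω ∂μ :=
        (lintegral_finsetSum _ fun i _ => measurable_one.indicator (hA i)).symm
    _ = ∫⁻ _, (r : ℝ≥0∞) ∂μ := lintegral_congr_ae <| hinj.mono fun ω hω => by
        simp only [A, Set.indicator_apply, Set.mem_ofPred_eq, Pi.one_apply]
        rw [sum_boole, card_filter_strictRank_lt hω (by simpa using hr)]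
    _ = r * μ Set.univ := lintegral_const _

theorem Exchangeable.measure_strictRank_lt [IsProbabilityMeasure μ]
    (hexch : Exchangeable μ Z) (hZ : ∀ i, Measurable (Z i)) (hinj : ∀ᵐ ω ∂μ, Injective (Z · ω)) {r : ℕ} (hr : r ≤ m)
    (i : Fin m) : μ {ω | strictRank (Z · ω) i < r} = r / m := by
  have hsum := sum_measure_strictRank_lt hZ hinj hr
  rw [sum_congr rfl fun j _ => hexch.measure_strictRank_eq hZ (· < r) j i, sum_const, card_univ,
    Fintype.card_fin, nsmul_eq_mul, measure_univ, mul_one] at hsum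
  rw [ENNReal.eq_div_iff (by simpa using i.pos.ne') (ENNReal.natCast_ne_top m), hsum]

end Exchangeable

theorem split_conformal_near_tightness_general
    {Ω : Type*} [MeasurableSpace Ω] (μ : Measure Ω) [IsProbabilityMeasure μ]
    (n : ℕ) (Z : Fin (n + 1) → Ω → ℝ) (hZ : ∀ i, Measurable (Z i))
    (hexch : Exchangeable μ Z)
    (hdistinct : ∀ᵐ ω ∂μ, ∀ i j : Fin (n + 1), i ≠ j → Z i ω ≠ Z j ω)
    (α : ℝ) (hα1 : α < 1)
    (r : ℕ) (hr : r = ⌈((n : ℝ) + 1) * (1 - α)⌉₊) (hrn : r ≤ n)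
    (qhat : Ω → ℝ)
    (hq : ∀ ω, qhat ω = kthSmallest (fun i : Fin n => Z i.castSucc ω) r) :
    (μ {ω | Z (Fin.last n) ω ≤ qhat ω}).toReal ≤ 1 - α + 1 / (n + 1) := by
  have hinj : ∀ᵐ ω ∂μ, Injective (Z · ω) :=
    hdistinct.mono fun ω hω => injective_iff_pairwise_ne.2 hω
  have hpos : 0 < ((n : ℝ) + 1) * (1 - α) := mul_pos (by positivity) (by linarith)
  have hr0 : 0 < r := hr ▸ Nat.ceil_pos.2 hpos
  have hevent :
      {ω | Z (Fin.last n) ω ≤ qhat ω} =ᵐ[μ] {ω | strictRank (Z · ω) (Fin.last n) < r} :=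
    hinj.mono fun ω hω => by
      simp only [hq]
      exact propext (last_le_kthSmallest_iff_strictRank_lt hω hr0 hrn)
  rw [measure_congr hevent, hexch.measure_strictRank_lt hZ hinj (hrn.trans n.le_succ),
    ENNReal.toReal_div, ENNReal.toReal_natCast, ENNReal.toReal_natCast, Nat.cast_succ,
    div_le_iff₀ (by positivity)]
  calc (r : ℝ) ≤ ((n : ℝ) + 1) * (1 - α) + 1 := hr ▸ (Nat.ceil_lt_add_one hpos.le).le
    _ = (1 - α + 1 / (n + 1)) * (n + 1) := by field_simp

theorem split_conformal_near_tightness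
    {Ω : Type*} [MeasurableSpace Ω] (μ : Measure Ω) [IsProbabilityMeasure μ]
    (n : ℕ) (Z : Fin (n + 1) → Ω → ℝ) (hZ : ∀ i, Measurable (Z i))
    (hexch : Exchangeable μ Z)
    (hdistinct : ∀ᵐ ω ∂μ, ∀ i j : Fin (n + 1), i ≠ j → Z i ω ≠ Z j ω)
    (α : ℝ) (hα0 : 0 < α) (hα1 : α < 1)
    (r : ℕ) (hr : r = ⌈((n : ℝ) + 1) * (1 - α)⌉₊) (hrn : r ≤ n)
    (qhat : Ω → ℝ)
    (hq : ∀ ω, qhat ω = kthSmallest (fun i : Fin n => Z i.castSucc ω) r) :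
    (μ {ω | Z (Fin.last n) ω ≤ qhat ω}).toReal ≤ 1 - α + 1 / (n + 1) :=
  split_conformal_near_tightness_general μ n Z hZ hexch hdistinct α hα1 r hr hrn qhat hq
end
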